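/- arXiv:2010.00886 — 2 statements merged into one kernel-verified Lean document; each statement's English description precedes it below -/
import Mathlib

section
/- For every positive integer k, the set of all k + 2 leaves of the tree T_k is an exponentially independent set in T_k. -/
open SimpleGraph
open scoped Classical

/-- The graph obtained from `G` by deleting the vertices of `A`
(they are kept as isolated vertices, which does not affect adjacency or distances
among the remaining vertices). -/
def SimpleGraph.deleteSet {V : Type*} (G : SimpleGraph V) (A : Set V) : SimpleGraph V where
  Adj x y := G.Adj x y ∧ x ∉ A ∧ y ∉ A
  symm := ⟨fun _ _ ⟨h, hx, hy⟩ => ⟨h.symm, hy, hx⟩⟩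
  loopless := ⟨fun x ⟨h, _, _⟩ => G.loopless.irrefl x h⟩

/-- `dist_{(G,S)}(u,v)`: the distance between `u` and `v` in `G - (S \ {u,v})`,
with value `⊤` if `u` and `v` lie in different components of that graph. -/
noncomputable def distDel {V : Type*} (G : SimpleGraph V) (S : Set V) (u v : V) : ℕ∞ :=
  (G.deleteSet (S \ {u, v})).edist u v

/-- `w_{(G,S)}(u) = Σ_{v ∈ S} (1/2)^{dist_{(G,S)}(u,v) - 1}` for a finite set `S`,
where a summand with infinite distance equals `0`. -/
noncomputable def expW {V : Type*} (G : SimpleGraph V) (S : Finset V) (u : V) : ℝ :=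
  ∑ v ∈ S, if distDel G (↑S) u v = ⊤ then 0
    else 2 * (1 / 2 : ℝ) ^ (distDel G (↑S) u v).toNat

/-- `S` is exponentially independent in `G`: `w_{(G,S∖{u})}(u) < 1` for every `u ∈ S`. -/
def ExpIndep {V : Type*} (G : SimpleGraph V) (S : Finset V) : Prop :=
  ∀ u ∈ S, expW G (S.erase u) u < 1

/-- The exponential independence number of `G`: the maximum cardinality of an
exponentially independent set in `G`. -/
noncomputable def expIndepNum (V : Type*) [Fintype V] (G : SimpleGraph V) : ℕ :=
  sSup {m : ℕ | ∃ S : Finset V, ExpIndep G S ∧ S.card = m}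

/-- Vertices of the tree `T_k`: `.inl (i, 0) = aᵢ₊₁`, `.inl (i, 1) = bᵢ₊₁`,
`.inl (i, 2) = cᵢ₊₁` for `i : Fin k`, and `.inr (0, ·)`, `.inr (1, ·)` are the two
further pendant paths attached to `a₁` and `a_k`, respectively. -/
abbrev TkVert (k : ℕ) := (Fin k × Fin 3) ⊕ (Fin 2 × Fin 2)

/-- The tree `T_k`, obtained from the path `a₁ a₂ … a_k` by attaching to each `aᵢ` a
pendant path `aᵢ bᵢ cᵢ`, and attaching to each of `a₁` and `a_k` one further pendant
path on two new vertices; it has order `3k + 4`. -/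
def TkGraph (k : ℕ) (hk : 0 < k) : SimpleGraph (TkVert k) :=
  SimpleGraph.fromRel (fun x y =>
    (∃ i j : Fin k, (i : ℕ) + 1 = (j : ℕ) ∧ x = Sum.inl (i, 0) ∧ y = Sum.inl (j, 0)) ∨
    (∃ i : Fin k, x = Sum.inl (i, 0) ∧ y = Sum.inl (i, 1)) ∨
    (∃ i : Fin k, x = Sum.inl (i, 1) ∧ y = Sum.inl (i, 2)) ∨
    (x = Sum.inl (⟨0, hk⟩, 0) ∧ y = Sum.inr (0, 0)) ∨
    (x = Sum.inl (⟨k - 1, by omega⟩, 0) ∧ y = Sum.inr (1, 0)) ∨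
    (∃ j : Fin 2, x = Sum.inr (j, 0) ∧ y = Sum.inr (j, 1)))

/-- The `k + 2` leaves of `T_k`. -/
def TkLeaves (k : ℕ) : Finset (TkVert k) :=
  (Finset.univ.image fun i : Fin k => (Sum.inl (i, 2) : TkVert k)) ∪
    (Finset.univ.image fun j : Fin 2 => (Sum.inr (j, 1) : TkVert k))


/-! Deleting vertices only lengthens distances, so `w_{(G,S)}(u) ≤ ∑_{v ∈ S} 2 · 2^{-φ(v)}` for any
`φ : V → ℕ` vanishing at `u` that increases by at most one along edges. A leaf `u` of `T_k` hangs
off a spine vertex `aₚ` by a path `u m aₚ`, and the tree distance from `u` to any other leaf `v`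
is `|p - pos v| + 4`, where `pos v` is the spine index of the branch of `v`. Summing the two
geometric series along the spine gives `w(u) ≤ (3 + 1 + 1) / 8 < 1`. -/

namespace SimpleGraph

variable {V : Type*} {G : SimpleGraph V}

def IsOneLipschitz (G : SimpleGraph V) (φ : V → ℕ) : Prop :=
  ∀ ⦃x y⦄, G.Adj x y → φ y ≤ φ x + 1

lemma deleteSet_le (A : Set V) : G.deleteSet A ≤ G := fun _ _ h => h.1

lemma edist_le_distDel (S : Set V) (u v : V) : G.edist u v ≤ distDel G S u v :=
  edist_anti (deleteSet_le _)

namespace IsOneLipschitz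

variable {φ : V → ℕ} (hφ : G.IsOneLipschitz φ)
include hφ

lemma le_add_length {u v : V} (w : G.Walk u v) : φ v ≤ φ u + w.length := by
  induction w with
  | nil => simp
  | cons h _ ih => have := hφ h; rw [Walk.length_cons]; omega

lemma le_edist {u : V} (hu : φ u = 0) (v : V) : (φ v : ℕ∞) ≤ G.edist u v := by
  by_cases hr : G.Reachable u v
  · obtain ⟨w, hw⟩ := hr.exists_walk_length_eq_edist
    have := hφ.le_add_length w
    rw [← hw, hu, zero_add] at *
    exact_mod_cast this
  · simp [edist_eq_top_of_not_reachable hr]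

lemma expW_le {u : V} (hu : φ u = 0) (S : Finset V) :
    expW G S u ≤ ∑ v ∈ S, 2 * (1 / 2 : ℝ) ^ φ v := by
  refine Finset.sum_le_sum fun v _ => ?_
  split_ifs with htop
  · positivity
  · have hle : (φ v : ℕ∞) ≤ (distDel G S u v).toNat := by
      rw [ENat.natCast_toNat htop]
      exact (hφ.le_edist hu v).trans (edist_le_distDel _ u v)
    gcongr 2 * ?_
    exact pow_le_pow_of_le_one (by norm_num) (by norm_num) (by exact_mod_cast hle)

lemma update_pendant [DecidableEq V] {u m a : V} (hu : G.neighborSet u = {m})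
    (hm : G.neighborSet m ⊆ {a, u}) (ha : φ a ≤ 2) :
    G.IsOneLipschitz (Function.update (Function.update φ m 1) u 0) := by
  intro x y hxy
  have hadj : ∀ y, G.Adj u y ↔ y = m := fun y => Set.ext_iff.mp hu y
  have hum : u ≠ m := G.ne_of_adj ((hadj m).mpr rfl)
  simp only [Function.update_apply]
  by_cases hyu : y = u
  · simp [hyu]
  by_cases hym : y = m
  · simp [hym, hum.symm]
  by_cases hxu : x = u
  · exact absurd ((hadj y).mp (hxu ▸ hxy)) hym
  by_cases hxm : x = m
  · obtain rfl : y = a := by simpa [hyu] using hm (hxm ▸ hxy : G.Adj m y)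
    simp [hyu, hym, hxm, hum.symm, ha]
  simp [hyu, hym, hxu, hxm, hφ hxy]

-- `φ` need not vanish at `u`; resetting it to `0, 1` along the pendant path `u m` fixes that.
lemma expW_le_of_pendant {u m a : V} (hu : G.neighborSet u = {m})
    (hm : G.neighborSet m ⊆ {a, u}) (ha : φ a ≤ 2) {S : Finset V} (hS : ∀ v ∈ S, v ≠ u ∧ v ≠ m) :
    expW G S u ≤ ∑ v ∈ S, 2 * (1 / 2 : ℝ) ^ φ v := by
  classical
  calc expW G S u
      ≤ ∑ v ∈ S, 2 * (1 / 2 : ℝ) ^ Function.update (Function.update φ m 1) u 0 v :=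
        (hφ.update_pendant hu hm ha).expW_le (by simp) S
    _ = ∑ v ∈ S, 2 * (1 / 2 : ℝ) ^ φ v :=
        Finset.sum_congr rfl fun v hv => by simp [(hS v hv).1, (hS v hv).2]

end IsOneLipschitz

end SimpleGraph

open Finset

lemma sum_range_half_pow_dist_le (p k : ℕ) :
    ∑ i ∈ range k, (1 / 2 : ℝ) ^ Nat.dist p i ≤ 3 := by
  calc ∑ i ∈ range k, (1 / 2 : ℝ) ^ Nat.dist p i
      ≤ ∑ i ∈ range (p + 1 + k), (1 / 2 : ℝ) ^ Nat.dist p i :=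
        sum_le_sum_of_subset_of_nonneg (range_subset_range.2 (by omega)) fun _ _ _ => by positivity
    _ = ∑ i ∈ range (p + 1), (1 / 2 : ℝ) ^ (p + 1 - 1 - i) +
          ∑ i ∈ range k, (1 / 2 : ℝ) ^ (i + 1) := by
        rw [← sum_range_add_sum_Ico _ (by omega : p + 1 ≤ p + 1 + k), sum_Ico_eq_sum_range,
          Nat.add_sub_cancel_left]
        congr 1
        · refine sum_congr rfl fun i hi => ?_
          rw [mem_range] at hi
          congr 1; simp only [Nat.dist]; omega
        · refine sum_congr rfl fun i _ => ?_
          congr 1; simp only [Nat.dist]; omega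
    _ = ∑ i ∈ range (p + 1), (1 / 2 : ℝ) ^ i + 1 / 2 * ∑ i ∈ range k, (1 / 2 : ℝ) ^ i := by
        rw [sum_range_reflect (fun i => (1 / 2 : ℝ) ^ i), mul_sum]
        simp only [pow_succ']
    _ ≤ 2 + 1 / 2 * 2 := by gcongr <;> exact sum_geometric_two_le _
    _ = 3 := by norm_num

section Tk

variable {k : ℕ} (hk : 0 < k)

def tkPos (k : ℕ) : TkVert k → ℕ
  | .inl (i, _) => i
  | .inr (t, _) => if t = 0 then 0 else k - 1

def tkHeight : TkVert k → ℕ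
  | .inl (_, s) => s
  | .inr (_, s) => s + 1

/-- `x` lies at distance `tkHeight x` from the spine vertex `a_{tkPos k x + 1}`, so this is
`2` plus the distance from `aₚ₊₁` to `x` in `T_k`. -/
def tkPotential (k p : ℕ) (x : TkVert k) : ℕ := Nat.dist p (tkPos k x) + tkHeight x + 2

lemma tkPotential_isOneLipschitz (p : ℕ) : (TkGraph k hk).IsOneLipschitz (tkPotential k p) := by
  rintro x y ⟨-, h | h⟩ <;>
  rcases h with ⟨i, j, hij, rfl, rfl⟩ | ⟨i, rfl, rfl⟩ | ⟨i, rfl, rfl⟩ | ⟨rfl, rfl⟩ | ⟨rfl, rfl⟩ |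
    ⟨t, rfl, rfl⟩ <;>
  simp [tkPotential, tkPos, tkHeight, Nat.dist] <;> omega

@[simp]
lemma inl_mem_tkLeaves (i : Fin k) (s : Fin 3) : Sum.inl (i, s) ∈ TkLeaves k ↔ s = 2 := by
  simp [TkLeaves, eq_comm]

@[simp]
lemma inr_mem_tkLeaves (t s : Fin 2) : Sum.inr (t, s) ∈ TkLeaves k ↔ s = 1 := by
  simp [TkLeaves, eq_comm]

lemma card_tkLeaves : (TkLeaves k).card = k + 2 := by
  rw [TkLeaves, card_union_of_disjoint (by simp [Finset.disjoint_left]),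
    card_image_of_injective _ (fun _ _ h => by simpa using h),
    card_image_of_injective _ (fun _ _ h => by simpa using h)]
  simp

lemma sum_tkLeaves_le (p : ℕ) :
    ∑ v ∈ TkLeaves k, 2 * (1 / 2 : ℝ) ^ tkPotential k p v ≤ 5 / 8 := by
  have hleaf : ∀ v ∈ TkLeaves k,
      2 * (1 / 2 : ℝ) ^ tkPotential k p v = 1 / 8 * (1 / 2 : ℝ) ^ Nat.dist p (tkPos k v) := by
    rintro (⟨i, s⟩ | ⟨t, s⟩) hv <;> simp only [inl_mem_tkLeaves, inr_mem_tkLeaves] at hv <;>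
      subst hv <;> simp [tkPotential, tkHeight, pow_add] <;> ring
  rw [sum_congr rfl hleaf, ← mul_sum, TkLeaves, sum_union (by simp [Finset.disjoint_left]),
    sum_image (fun _ _ _ _ h => by simpa using h), sum_image (fun _ _ _ _ h => by simpa using h),
    Fin.sum_univ_two]
  have hspine : ∑ i : Fin k, (1 / 2 : ℝ) ^ Nat.dist p (tkPos k (.inl (i, 2))) ≤ 3 :=
    (Fin.sum_univ_eq_sum_range (fun i => (1 / 2 : ℝ) ^ Nat.dist p i) k).trans_le
      (sum_range_half_pow_dist_le p k)
  have hle_one : ∀ n : ℕ, (1 / 2 : ℝ) ^ n ≤ 1 := fun _ => pow_le_one₀ (by norm_num) (by norm_num)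
  linarith [hle_one (Nat.dist p (tkPos k (.inr (0, 1)))),
    hle_one (Nat.dist p (tkPos k (.inr (1, 1))))]

lemma neighborSet_inl_two (i : Fin k) :
    (TkGraph k hk).neighborSet (.inl (i, 2)) = {.inl (i, 1)} := by
  ext y; simp [TkGraph]; aesop

lemma neighborSet_inl_one (i : Fin k) :
    (TkGraph k hk).neighborSet (.inl (i, 1)) = {.inl (i, 0), .inl (i, 2)} := by
  ext y; simp [TkGraph]; aesop

lemma neighborSet_inr_one (t : Fin 2) :
    (TkGraph k hk).neighborSet (.inr (t, 1)) = {.inr (t, 0)} := by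
  fin_cases t <;> ext y <;> simp [TkGraph] <;> aesop

lemma neighborSet_inr_zero_zero :
    (TkGraph k hk).neighborSet (.inr (0, 0)) = {.inl (⟨0, hk⟩, 0), .inr (0, 1)} := by
  ext y; simp [TkGraph]; aesop

lemma neighborSet_inr_one_zero :
    (TkGraph k hk).neighborSet (.inr (1, 0)) = {.inl (⟨k - 1, by omega⟩, 0), .inr (1, 1)} := by
  ext y; simp [TkGraph]; aesop

lemma one_lt_ncard_neighborSet_inl_zero (i : Fin k) :
    1 < ((TkGraph k hk).neighborSet (.inl (i, 0))).ncard := by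
  rw [Set.one_lt_ncard_iff (Set.toFinite _)]
  by_cases hi : (i : ℕ) + 1 < k
  · refine ⟨.inl (i, 1), .inl (⟨i + 1, hi⟩, 0), by simp [TkGraph], ?_, by simp⟩
    exact ⟨by simp [Fin.ext_iff], Or.inl (Or.inl ⟨i, ⟨i + 1, hi⟩, rfl, rfl, rfl⟩)⟩
  · have hlast : i = ⟨k - 1, by omega⟩ := Fin.ext (by simp only; omega)
    exact ⟨.inl (i, 1), .inr (1, 0), by simp [TkGraph], by simp [TkGraph, hlast], by simp⟩

lemma mem_tkLeaves_iff_ncard_neighborSet_eq_one (v : TkVert k) :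
    v ∈ TkLeaves k ↔ ((TkGraph k hk).neighborSet v).ncard = 1 := by
  rcases v with ⟨i, s⟩ | ⟨t, s⟩ <;> fin_cases s
  · simpa using (one_lt_ncard_neighborSet_inl_zero hk i).ne'
  · simp [neighborSet_inl_one]
  · simp [neighborSet_inl_two]
  · fin_cases t
    · simp [neighborSet_inr_zero_zero]
    · simp [neighborSet_inr_one_zero]
  · simp [neighborSet_inr_one]

lemma exists_pendant_of_mem_tkLeaves {u : TkVert k} (hu : u ∈ TkLeaves k) :
    ∃ m ∉ TkLeaves k, ∃ a p, (TkGraph k hk).neighborSet u = {m} ∧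
      (TkGraph k hk).neighborSet m ⊆ {a, u} ∧ tkPotential k p a ≤ 2 := by
  rcases u with ⟨i, s⟩ | ⟨t, s⟩ <;> simp only [inl_mem_tkLeaves, inr_mem_tkLeaves] at hu <;>
    subst hu
  · exact ⟨.inl (i, 1), by simp, .inl (i, 0), i, neighborSet_inl_two hk i,
      (neighborSet_inl_one hk i).le, by simp [tkPotential, tkPos, tkHeight]⟩
  · fin_cases t
    · exact ⟨.inr (0, 0), by simp, .inl (⟨0, hk⟩, 0), 0, neighborSet_inr_one hk 0,
        (neighborSet_inr_zero_zero hk).le, by simp [tkPotential, tkPos, tkHeight]⟩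
    · exact ⟨.inr (1, 0), by simp, .inl (⟨k - 1, by omega⟩, 0), k - 1, neighborSet_inr_one hk 1,
        (neighborSet_inr_one_zero hk).le, by simp [tkPotential, tkPos, tkHeight]⟩

lemma expW_lt_one_of_subset_tkLeaves {u : TkVert k} (hu : u ∈ TkLeaves k)
    {S : Finset (TkVert k)} (hS : S ⊆ TkLeaves k) (huS : u ∉ S) : expW (TkGraph k hk) S u < 1 := by
  obtain ⟨m, hm, a, p, hnbr_u, hnbr_m, ha⟩ := exists_pendant_of_mem_tkLeaves hk hu
  have hSum : ∀ v ∈ S, v ≠ u ∧ v ≠ m :=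
    fun v hv => ⟨fun h => huS (h ▸ hv), fun h => hm (h ▸ hS hv)⟩
  calc expW (TkGraph k hk) S u
      ≤ ∑ v ∈ S, 2 * (1 / 2 : ℝ) ^ tkPotential k p v :=
        (tkPotential_isOneLipschitz hk p).expW_le_of_pendant hnbr_u hnbr_m ha hSum
    _ ≤ ∑ v ∈ TkLeaves k, 2 * (1 / 2 : ℝ) ^ tkPotential k p v :=
        sum_le_sum_of_subset_of_nonneg hS fun _ _ _ => by positivity
    _ ≤ 5 / 8 := sum_tkLeaves_le p
    _ < 1 := by norm_num

-- `ExpIndep` erases with the classical `DecidableEq` instance, hence the `convert`.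
lemma expIndep_of_subset_tkLeaves {S : Finset (TkVert k)} (hS : S ⊆ TkLeaves k) :
    ExpIndep (TkGraph k hk) S := fun u hu =>
  expW_lt_one_of_subset_tkLeaves hk (hS hu) (by convert (erase_subset u S).trans hS) (by simp)

end Tk

/-- For every positive integer `k`, the set of all `k + 2` leaves of the tree `T_k` is
an exponentially independent set in `T_k`. -/
theorem stmt10 (k : ℕ) (hk : 0 < k) :
    (∀ v : TkVert k, v ∈ TkLeaves k ↔ ((TkGraph k hk).neighborSet v).ncard = 1) ∧
    (TkLeaves k).card = k + 2 ∧
    ExpIndep (TkGraph k hk) (TkLeaves k) :=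
  ⟨mem_tkLeaves_iff_ncard_neighborSet_eq_one hk, card_tkLeaves,
    expIndep_of_subset_tkLeaves hk subset_rfl⟩
end

section
/- If T is a finite tree of order n ≥ 4 in which every vertex has degree 1 or 3, and L is the set of leaves of T (so |L| = (n + 2)/2), then for any leaf x of T the set L ∖ {x} is an exponentially independent set in T of cardinality n/2; in particular, α_e(T) ≥ n/2. -/
open SimpleGraph
open scoped Classical

/-! Root the tree at a leaf `u`. Every vertex at depth `d ≥ 1` that is not a leaf has at most two
children, so the weight `2^{-d}` it carries is at least the total weight of its children: the
quantity "weight of the leaves found up to depth `d`, plus `2^{-d}` per internal vertex at depth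
`d`" never increases, and it starts at `1/2`. This is Kraft's inequality
`∑_{v leaf, v ≠ u} 2^{-dist(u,v)} ≤ 1/2`. Deleting vertices only lengthens distances, so
`w(u) ≤ 2 ∑_{v ∈ S ∖ u} 2^{-dist(u,v)}`, which is `< 1` once a second leaf `x` is left out of `S`.
The count `|L| = (n + 2)/2` is the handshake lemma. -/

open Finset

theorem sum_mul_half_pow_le_half_of_branching (ℓ m : ℕ → ℕ) (h1 : ℓ 1 + m 1 ≤ 1)
    (hstep : ∀ k ≥ 1, ℓ (k + 1) + m (k + 1) ≤ 2 * m k) (N : ℕ) :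
    ∑ k ∈ Icc 1 N, (ℓ k : ℝ) * (1 / 2) ^ k ≤ 1 / 2 := by
  have potential : ∀ n ≥ 1, ∑ k ∈ Icc 1 n, (ℓ k : ℝ) * (1 / 2) ^ k + m n * (1 / 2) ^ n ≤ 1 / 2 := by
    intro n hn
    induction n, hn using Nat.le_induction with
    | base =>
      have : (ℓ 1 : ℝ) + m 1 ≤ 1 := by exact_mod_cast h1
      simp only [Icc_self, sum_singleton]
      linarith
    | succ n hn ih =>
      have hbranch : (ℓ (n + 1) : ℝ) + m (n + 1) ≤ 2 * m n := by exact_mod_cast hstep n hn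
      rw [sum_Icc_succ_top (by omega), pow_succ]
      nlinarith [pow_pos (by norm_num : (0 : ℝ) < 1 / 2) n]
  rcases Nat.eq_zero_or_pos N with rfl | hN
  · simp
  · linarith [potential N hN, (by positivity : (0 : ℝ) ≤ m N * (1 / 2) ^ N)]

namespace SimpleGraph

variable {V : Type*} {G : SimpleGraph V} {u v : V}

theorem Connected.exists_adj_dist_eq_of_dist_eq_succ (hG : G.Connected) {d : ℕ}
    (h : G.dist u v = d + 1) : ∃ p, G.Adj p v ∧ G.dist u p = d := by
  obtain ⟨w, hw⟩ := hG.exists_walk_length_eq_dist u v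
  have hvu : v ≠ u := by
    rintro rfl
    simp at h
  obtain ⟨p, hadj, q, hq⟩ := Walk.exists_eq_cons_of_ne hvu w.reverse
  have hlen : q.length = d := by
    have := congrArg Walk.length hq
    simp only [Walk.length_reverse, Walk.length_cons] at this
    omega
  refine ⟨p, hadj.symm, le_antisymm ?_ ?_⟩
  · simpa [hlen] using dist_le q.reverse
  · have := hG.dist_triangle (u := u) (v := p) (w := v)
    rw [dist_eq_one_iff_adj.mpr hadj.symm] at this
    omega

theorem ncard_neighborSet_eq_degree (v : V) [Fintype (G.neighborSet v)] :
    (G.neighborSet v).ncard = G.degree v := by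
  rw [← card_neighborSet_eq_degree, ← Nat.card_coe_set_eq, Nat.card_eq_fintype_card]

variable [Fintype V]

theorem Connected.card_neighbors_dist_eq_succ_lt_degree (hG : G.Connected) {p : V} {d : ℕ}
    (hp : G.dist u p = d + 1) : #{v ∈ G.neighborFinset p | G.dist u v = d + 2} < G.degree p := by
  obtain ⟨q, hqp, hq⟩ := hG.exists_adj_dist_eq_of_dist_eq_succ hp
  refine card_lt_card ⟨filter_subset _ _, fun hsub => ?_⟩
  have := (mem_filter.mp (hsub (by simpa using hqp.symm))).2
  omega

theorem Connected.card_dist_eq_add_two_le (hG : G.Connected) (hmax : ∀ v, G.degree v ≤ 3)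
    (d : ℕ) : #{v | G.dist u v = d + 2} ≤ 2 * #{p | G.degree p ≠ 1 ∧ G.dist u p = d + 1} := by
  calc #{v | G.dist u v = d + 2}
      ≤ #(({p | G.degree p ≠ 1 ∧ G.dist u p = d + 1} : Finset V).biUnion
          fun p => {v ∈ G.neighborFinset p | G.dist u v = d + 2}) := by
        refine card_le_card fun v hv => ?_
        have hv : G.dist u v = d + 2 := by simpa using hv
        obtain ⟨p, hpv, hp⟩ := hG.exists_adj_dist_eq_of_dist_eq_succ hv
        have hchild : v ∈ ({v ∈ G.neighborFinset p | G.dist u v = d + 2} : Finset V) := by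
          simpa [hv] using hpv
        have hnot_leaf : G.degree p ≠ 1 := fun h1 => by
          have := hG.card_neighbors_dist_eq_succ_lt_degree hp
          have := card_pos.mpr ⟨v, hchild⟩
          omega
        exact mem_biUnion.mpr ⟨p, by simp [hnot_leaf, hp], hchild⟩
    _ ≤ _ := by
        rw [mul_comm]
        refine card_biUnion_le_card_mul _ _ _ fun p hp => ?_
        have hp : G.degree p ≠ 1 ∧ G.dist u p = d + 1 := by simpa using hp
        have := hG.card_neighbors_dist_eq_succ_lt_degree hp.2
        have := hmax p
        omega

theorem Connected.sum_leaves_half_pow_dist_le (hG : G.Connected) (hmax : ∀ v, G.degree v ≤ 3)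
    (hu : G.degree u = 1) :
    ∑ v ∈ ({v | G.degree v = 1} : Finset V).erase u, (1 / 2 : ℝ) ^ G.dist u v ≤ 1 / 2 := by
  set s := ({v | G.degree v = 1} : Finset V).erase u
  set ℓ : ℕ → ℕ := fun k => #{v ∈ s | G.dist u v = k}
  set m : ℕ → ℕ := fun k => #{p | G.degree p ≠ 1 ∧ G.dist u p = k}
  have hsphere : ∀ k, ℓ k + m k ≤ #{v | G.dist u v = k} := by
    intro k
    rw [← card_union_of_disjoint]
    · refine card_le_card fun v hv => ?_
      simp only [mem_union, mem_filter, mem_univ, true_and] at hv ⊢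
      tauto
    · refine Finset.disjoint_left.mpr fun v hv hv' => ?_
      simp only [s, mem_filter, mem_erase, mem_univ, true_and] at hv hv'
      exact hv'.1 hv.1.2
  have h1 : ℓ 1 + m 1 ≤ 1 := by
    have hnbr : ({v | G.dist u v = 1} : Finset V) = G.neighborFinset u := by
      ext v; simp [dist_eq_one_iff_adj]
    have := hsphere 1
    rwa [hnbr, card_neighborFinset_eq_degree, hu] at this
  have hstep : ∀ k ≥ 1, ℓ (k + 1) + m (k + 1) ≤ 2 * m k := by
    rintro (_ | d) hd
    · omega
    · exact (hsphere (d + 2)).trans (hG.card_dist_eq_add_two_le hmax d)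
  have hrange : ∀ v ∈ s, G.dist u v ∈ Icc 1 (Fintype.card V) := by
    intro v hv
    have hvu : v ≠ u := (mem_erase.mp hv).1
    obtain ⟨p, hp, hlen⟩ := hG.exists_path_of_dist u v
    have := (hG u v).pos_dist_of_ne hvu.symm
    have := hp.length_lt
    simp only [mem_Icc]
    omega
  calc ∑ v ∈ s, (1 / 2 : ℝ) ^ G.dist u v
      = ∑ k ∈ Icc 1 (Fintype.card V), ∑ v ∈ s with G.dist u v = k, (1 / 2 : ℝ) ^ G.dist u v :=
        (sum_fiberwise_of_maps_to hrange _).symm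
    _ = ∑ k ∈ Icc 1 (Fintype.card V), (ℓ k : ℝ) * (1 / 2) ^ k := by
        refine sum_congr rfl fun k _ => ?_
        rw [sum_congr rfl fun v hv => by rw [(mem_filter.mp hv).2], sum_const, nsmul_eq_mul]
    _ ≤ 1 / 2 := sum_mul_half_pow_le_half_of_branching ℓ m h1 hstep _

theorem IsTree.two_mul_card_leaves [DecidableRel G.Adj] (hT : G.IsTree)
    (hdeg : ∀ v, G.degree v = 1 ∨ G.degree v = 3) :
    2 * #{v | G.degree v = 1} = Fintype.card V + 2 := by
  have hsum : ∑ v, G.degree v = #{v | G.degree v = 1} + 3 * #{v | ¬G.degree v = 1} := by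
    rw [← sum_filter_add_sum_filter_not univ (fun v => G.degree v = 1),
      sum_congr rfl fun v hv => (mem_filter.mp hv).2,
      sum_congr rfl fun v hv => (hdeg v).resolve_left (mem_filter.mp hv).2]
    simp [mul_comm]
  have hsplit := card_filter_add_card_filter_not (s := univ) fun v => G.degree v = 1
  have := G.sum_degrees_eq_twice_card_edges
  have := hT.card_edgeFinset
  rw [card_univ] at hsplit
  omega

end SimpleGraph

section ExpIndep

variable {V : Type*} {G : SimpleGraph V}

theorem dist_le_toNat_distDel {S : Set V} {u v : V} (h : distDel G S u v ≠ ⊤) :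
    G.dist u v ≤ (distDel G S u v).toNat :=
  ENat.toNat_le_toNat (edist_anti fun _ _ hadj => hadj.1) h

theorem expW_le_two_mul_sum_half_pow_dist (S : Finset V) (u : V) :
    expW G S u ≤ 2 * ∑ v ∈ S, (1 / 2 : ℝ) ^ G.dist u v := by
  rw [expW, mul_sum]
  refine sum_le_sum fun v _ => ?_
  split_ifs with h
  · positivity
  · exact mul_le_mul_of_nonneg_left
      (pow_le_pow_of_le_one (by norm_num) (by norm_num) (dist_le_toNat_distDel h)) zero_le_two

theorem expIndep_of_sum_half_pow_dist_lt {S : Finset V}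
    (h : ∀ u ∈ S, ∑ v ∈ S.erase u, (1 / 2 : ℝ) ^ G.dist u v < 1 / 2) : ExpIndep G S :=
  fun u hu => (expW_le_two_mul_sum_half_pow_dist _ u).trans_lt (by linarith [h u hu])

theorem card_le_expIndepNum [Fintype V] {S : Finset V} (h : ExpIndep G S) :
    #S ≤ expIndepNum V G :=
  le_csSup ⟨Fintype.card V, by rintro _ ⟨T, -, rfl⟩; exact card_le_univ T⟩ ⟨S, h, rfl⟩

end ExpIndep

theorem stmt13_general {V : Type*} [Fintype V] (G : SimpleGraph V) (hT : G.IsTree)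
    (hdeg : ∀ v : V, (G.neighborSet v).ncard = 1 ∨ (G.neighborSet v).ncard = 3)
    (L : Finset V) (hL : ∀ v : V, v ∈ L ↔ (G.neighborSet v).ncard = 1) :
    (L.card : ℝ) = ((Fintype.card V : ℝ) + 2) / 2 ∧
    (∀ x ∈ L, ExpIndep G (L.erase x) ∧
      ((L.erase x).card : ℝ) = (Fintype.card V : ℝ) / 2) ∧
    (Fintype.card V : ℝ) / 2 ≤ (expIndepNum V G : ℝ) := by
  simp only [ncard_neighborSet_eq_degree] at hdeg hL
  have hleaves : ({v | G.degree v = 1} : Finset V) = L := by ext v; simp [hL]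
  have hcard : 2 * #L = Fintype.card V + 2 := hleaves ▸ hT.two_mul_card_leaves hdeg
  have hcardR : 2 * (#L : ℝ) = Fintype.card V + 2 := by exact_mod_cast hcard
  have hmax : ∀ v, G.degree v ≤ 3 := fun v => by rcases hdeg v with h | h <;> omega
  have hindep : ∀ x ∈ L, ExpIndep G (L.erase x) := by
    intro x hx
    refine expIndep_of_sum_half_pow_dist_lt fun u hu => ?_
    obtain ⟨hux, huL⟩ := mem_erase.mp hu
    have hkraft := hT.connected.sum_leaves_half_pow_dist_le hmax ((hL u).mp huL)
    rw [hleaves, ← sum_erase_add _ _ (mem_erase.mpr ⟨Ne.symm hux, hx⟩), erase_right_comm] at hkraft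
    linarith [pow_pos (by norm_num : (0 : ℝ) < 1 / 2) (G.dist u x)]
  have hcard_erase : ∀ x ∈ L, ((L.erase x).card : ℝ) = Fintype.card V / 2 := by
    intro x hx
    rw [card_erase_of_mem hx, Nat.cast_sub (card_pos.mpr ⟨x, hx⟩), Nat.cast_one]
    linarith
  obtain ⟨x, hx⟩ : L.Nonempty := card_pos.mp (by omega)
  refine ⟨by linarith, fun x hx => ⟨hindep x hx, hcard_erase x hx⟩, ?_⟩
  rw [← hcard_erase x hx]
  exact_mod_cast card_le_expIndepNum (hindep x hx)

/-- If `T` is a finite tree of order `n ≥ 4` in which every vertex has degree `1` or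
`3`, and `L` is its set of leaves (so `|L| = (n + 2)/2`), then for any leaf `x` the set
`L ∖ {x}` is an exponentially independent set of cardinality `n/2`; in particular,
`α_e(T) ≥ n/2`. -/
theorem stmt13 {V : Type*} [Fintype V] (G : SimpleGraph V) (hT : G.IsTree)
    (hn : 4 ≤ Fintype.card V)
    (hdeg : ∀ v : V, (G.neighborSet v).ncard = 1 ∨ (G.neighborSet v).ncard = 3)
    (L : Finset V) (hL : ∀ v : V, v ∈ L ↔ (G.neighborSet v).ncard = 1) :
    (L.card : ℝ) = ((Fintype.card V : ℝ) + 2) / 2 ∧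
    (∀ x ∈ L, ExpIndep G (L.erase x) ∧
      ((L.erase x).card : ℝ) = (Fintype.card V : ℝ) / 2) ∧
    (Fintype.card V : ℝ) / 2 ≤ (expIndepNum V G : ℝ) :=
  stmt13_general G hT hdeg L hL
end
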